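/- Let ε ∈ (1/(4π), 3/(4π)). Then there exists Δ₀ > 0 such that for every Borel probability measure μ on 𝕋 whose support is contained in the image of [−Δ₀, Δ₀] under the projection ℝ → 𝕋, the iterates T_ε^n μ converge weakly to δ₀ as n → ∞; that is, the synchronized state δ₀ is a stable fixed point of the self-consistent operator. -/

import Mathlib

open MeasureTheory

/-- The observable `y ↦ cos(2πy)` on the circle `𝕋 = ℝ/ℤ`. -/
noncomputable def cosObs : UnitAddCircle → ℝ :=
  AddCircle.liftIco 1 0 (fun x => Real.cos (2 * Real.pi * x))

/-- The map `f_μ : 𝕋 → 𝕋` induced by `x ↦ 2(x − ε·sin(2πx)·∫ cos(2πy) dμ(y))`, arising from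
mean-field coupled doubling maps with coupling `h(x,y) = sin(2πx)cos(2πy)`. -/
noncomputable def fMu (ε : ℝ) (μ : Measure UnitAddCircle) : UnitAddCircle → UnitAddCircle :=
  AddCircle.liftIco 1 0 (fun x =>
    (↑(2 * (x - ε * Real.sin (2 * Real.pi * x) * ∫ y, cosObs y ∂μ)) : UnitAddCircle))

/-- The self-consistent operator `T_ε μ = (f_μ)_* μ`. -/
noncomputable def Tsc (ε : ℝ) (μ : Measure UnitAddCircle) : Measure UnitAddCircle :=
  μ.map (fMu ε μ)

/-! With `c = ∫ cos 2πy dμ`, the lift `y ↦ 2(y - ε c sin 2πy)` of `f_μ` is `y ↦ 2(1 - 2πεc) y` up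
to an error `O(|y|³)`, by `|t - sin t| ≤ |t|³/6`. If `μ` lives on `[-Δ, Δ]` then `1 - c = O(Δ²)`, so
for `2πε ∈ (1/2, 3/2)` and `Δ` small the lift contracts `[-Δ, Δ]` by the factor
`1/2 + |1 - 2πε| < 1`. Hence the supports of the iterates `T_ε^n μ` shrink geometrically to `0`. -/

open Real Filter Topology Function

theorem AddCircle.liftIco_coe_apply_of_periodic {𝕜 B : Type*} [AddCommGroup 𝕜] [LinearOrder 𝕜]
    [IsOrderedAddMonoid 𝕜] [Archimedean 𝕜] {p : 𝕜} [hp : Fact (0 < p)] {a : 𝕜} {f : 𝕜 → B}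
    (hf : Periodic f p) (x : 𝕜) : liftIco p a f x = f x := by
  have h := liftIco_coe_apply (p := p) (f := f) (toIcoMod_mem_Ico hp.out a x)
  rwa [← self_sub_toIcoDiv_zsmul, hf.sub_zsmul_eq, coe_sub, coe_zsmul, coe_period, smul_zero,
    sub_zero] at h

theorem tendsto_integral_of_ae_dist_le {X : Type*} [PseudoMetricSpace X] [MeasurableSpace X]
    [OpensMeasurableSpace X] {μ : ℕ → Measure X} [∀ n, IsProbabilityMeasure (μ n)] {x : X}
    {r : ℕ → ℝ} (hr : Tendsto r atTop (𝓝 0)) (hμ : ∀ n, ∀ᵐ z ∂μ n, dist z x ≤ r n)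
    {ψ : X → ℝ} (hψ : Continuous ψ) :
    Tendsto (fun n => ∫ z, ψ z ∂μ n) atTop (𝓝 (ψ x)) := by
  rw [Metric.tendsto_nhds]
  intro e he
  obtain ⟨δ, hδ, hψδ⟩ := Metric.continuousAt_iff.mp hψ.continuousAt (e / 2) (half_pos he)
  filter_upwards [hr.eventually (gt_mem_nhds hδ)] with n hn
  have hnear : ∀ᵐ z ∂μ n, ‖ψ z - ψ x‖ ≤ e / 2 :=
    (hμ n).mono fun z hz => (hψδ (hz.trans_lt hn)).le
  have hint : Integrable ψ (μ n) :=
    ((Integrable.of_bound (by fun_prop) _ hnear).add (integrable_const (ψ x))).congr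
      (ae_of_all _ fun z => sub_add_cancel (ψ z) (ψ x))
  calc dist (∫ z, ψ z ∂μ n) (ψ x) = ‖∫ z, (ψ z - ψ x) ∂μ n‖ := by
        simp [integral_sub hint (integrable_const _), dist_eq_norm]
    _ ≤ e / 2 := by simpa using norm_integral_le_of_norm_le_const hnear
    _ < e := half_lt_self he

theorem cosObs_coe (y : ℝ) : cosObs y = cos (2 * π * y) :=
  AddCircle.liftIco_coe_apply_of_periodic (fun x => by simp [mul_add, cos_add_two_pi]) y

theorem continuous_cosObs : Continuous cosObs :=
  AddCircle.liftIco_zero_continuous (by simp) (by fun_prop)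

theorem abs_cosObs_le_one (z : UnitAddCircle) : |cosObs z| ≤ 1 := by
  induction z using QuotientAddGroup.induction_on with
  | H y => rw [cosObs_coe]; exact abs_cos_le_one _

theorem UnitAddCircle.coe_two : ((2 : ℝ) : UnitAddCircle) = 0 :=
  (AddCircle.coe_eq_zero_iff 1).mpr ⟨2, by norm_num⟩

theorem fMu_coe (ε : ℝ) (μ : Measure UnitAddCircle) (y : ℝ) :
    fMu ε μ y = ↑(2 * (y - ε * sin (2 * π * y) * ∫ z, cosObs z ∂μ)) := by
  refine AddCircle.liftIco_coe_apply_of_periodic (fun x => ?_) y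
  simp only [mul_add, mul_one, sin_add_two_pi, add_sub_right_comm, AddCircle.coe_add,
    UnitAddCircle.coe_two, add_zero]

theorem continuous_fMu (ε : ℝ) (μ : Measure UnitAddCircle) : Continuous (fMu ε μ) := by
  refine AddCircle.liftIco_zero_continuous ?_ (by fun_prop)
  simp [UnitAddCircle.coe_two]

instance isProbabilityMeasure_Tsc (ε : ℝ) (μ : Measure UnitAddCircle)
    [IsProbabilityMeasure μ] : IsProbabilityMeasure (Tsc ε μ) :=
  Measure.isProbabilityMeasure_map (continuous_fMu ε μ).aemeasurable

theorem isProbabilityMeasure_iterate_Tsc (ε : ℝ) (μ : Measure UnitAddCircle)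
    [IsProbabilityMeasure μ] (n : ℕ) : IsProbabilityMeasure ((fun ν => Tsc ε ν)^[n] μ) := by
  induction n with
  | zero => assumption
  | succ n ih => rw [iterate_succ_apply']; infer_instance

def arcAroundZero (r : ℝ) : Set UnitAddCircle :=
  (fun x : ℝ => (x : UnitAddCircle)) '' Set.Icc (-r) r

theorem arcAroundZero_mono : Monotone arcAroundZero :=
  fun _ _ h => Set.image_mono (Set.Icc_subset_Icc (neg_le_neg h) h)

theorem isClosed_arcAroundZero (r : ℝ) : IsClosed (arcAroundZero r) :=
  (isCompact_Icc.image (AddCircle.continuous_mk' 1)).isClosed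

theorem dist_zero_le_of_mem_arcAroundZero {r : ℝ} {z : UnitAddCircle}
    (hz : z ∈ arcAroundZero r) : dist z 0 ≤ r := by
  obtain ⟨y, hy, rfl⟩ := hz
  rw [dist_zero_right]
  exact QuotientAddGroup.norm_mk_le_norm.trans (abs_le.mpr hy)

theorem integrable_cosObs (μ : Measure UnitAddCircle) [IsFiniteMeasure μ] :
    Integrable cosObs μ :=
  .of_bound continuous_cosObs.aestronglyMeasurable 1 (ae_of_all _ abs_cosObs_le_one)

theorem integral_cosObs_le_one (μ : Measure UnitAddCircle) [IsProbabilityMeasure μ] :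
    ∫ z, cosObs z ∂μ ≤ 1 := by
  simpa using integral_mono (integrable_cosObs μ) (integrable_const 1)
    fun z => (abs_le.mp (abs_cosObs_le_one z)).2

theorem cos_le_integral_cosObs {r : ℝ} (hr : r ≤ 1 / 2) {μ : Measure UnitAddCircle}
    [IsProbabilityMeasure μ] (hμ : ∀ᵐ z ∂μ, z ∈ arcAroundZero r) :
    cos (2 * π * r) ≤ ∫ z, cosObs z ∂μ := by
  have hcos : ∀ᵐ z ∂μ, cos (2 * π * r) ≤ cosObs z := by
    filter_upwards [hμ] with z hz
    obtain ⟨y, hy, rfl⟩ := hz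
    have hy' : |y| ≤ r := abs_le.mpr hy
    rw [cosObs_coe, ← cos_abs (2 * π * y), abs_mul, abs_of_pos two_pi_pos]
    exact cos_le_cos_of_nonneg_of_le_pi (by positivity) (by nlinarith [pi_pos])
      (by nlinarith [pi_pos])
  simpa using integral_mono_ae (integrable_const _) (integrable_cosObs μ) hcos

theorem abs_sub_mul_sin_le (k t : ℝ) : |t - k * sin t| ≤ (|1 - k| + |k| * t ^ 2 / 6) * |t| :=
  calc |t - k * sin t| = |(1 - k) * t + k * (t - sin t)| := by ring_nf
    _ ≤ |1 - k| * |t| + |k| * (|t| ^ 3 / 6) := by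
        refine (abs_add_le _ _).trans ?_
        rw [abs_mul, abs_mul]
        gcongr
        exact abs_sub_sin_le t
    _ = (|1 - k| + |k| * t ^ 2 / 6) * |t| := by
        rw [pow_succ, sq_abs]
        ring

/- `syncRadius` makes the second-order error `2(2πΔ₀)²` in `abs_fMu_lift_le` half the gap between
the linear slope `2|1 - 2πε|` and `1`; `contractionRate` is the resulting midpoint. -/
noncomputable def contractionRate (ε : ℝ) : ℝ := 1 / 2 + |1 - 2 * π * ε|

noncomputable def syncRadius (ε : ℝ) : ℝ := √(1 - 2 * |1 - 2 * π * ε|) / (4 * π)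

theorem contractionRate_nonneg (ε : ℝ) : 0 ≤ contractionRate ε := by
  unfold contractionRate
  positivity

theorem syncRadius_le_half (ε : ℝ) : syncRadius ε ≤ 1 / 2 := by
  have h : √(1 - 2 * |1 - 2 * π * ε|) ≤ 1 :=
    sqrt_le_one.mpr (by linarith [abs_nonneg (1 - 2 * π * ε)])
  rw [syncRadius, div_le_iff₀ (by positivity)]
  nlinarith [pi_gt_three]

theorem abs_one_sub_two_pi_mul_lt_half {ε : ℝ}
    (hε : 2 * π * ε ∈ Set.Ioo (1 / 2 : ℝ) (3 / 2)) : |1 - 2 * π * ε| < 1 / 2 :=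
  abs_sub_lt_iff.mpr ⟨by linarith [hε.1], by linarith [hε.2]⟩

theorem contractionRate_lt_one {ε : ℝ} (hε : 2 * π * ε ∈ Set.Ioo (1 / 2 : ℝ) (3 / 2)) :
    contractionRate ε < 1 := by
  have := abs_one_sub_two_pi_mul_lt_half hε
  unfold contractionRate
  linarith

theorem syncRadius_pos {ε : ℝ} (hε : 2 * π * ε ∈ Set.Ioo (1 / 2 : ℝ) (3 / 2)) :
    0 < syncRadius ε := by
  have := abs_one_sub_two_pi_mul_lt_half hε
  unfold syncRadius
  have : 0 < √(1 - 2 * |1 - 2 * π * ε|) := sqrt_pos.mpr (by linarith)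
  positivity

theorem sq_two_pi_mul_syncRadius {ε : ℝ} (hε : 2 * π * ε ∈ Set.Ioo (1 / 2 : ℝ) (3 / 2)) :
    (2 * π * syncRadius ε) ^ 2 = (1 - 2 * |1 - 2 * π * ε|) / 4 := by
  have := abs_one_sub_two_pi_mul_lt_half hε
  rw [syncRadius, mul_div_assoc', div_pow, mul_pow, sq_sqrt (by linarith)]
  field_simp
  ring

theorem abs_fMu_lift_le {ε : ℝ} (hε : 2 * π * ε ∈ Set.Ioo (1 / 2 : ℝ) (3 / 2)) {c y : ℝ}
    (hc : cos (2 * π * syncRadius ε) ≤ c) (hc1 : c ≤ 1) (hy : |y| ≤ syncRadius ε) :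
    |2 * (y - ε * sin (2 * π * y) * c)| ≤ contractionRate ε * |y| := by
  have hb := abs_one_sub_two_pi_mul_lt_half hε
  have hs2 := sq_two_pi_mul_syncRadius hε
  set a := 2 * π * ε with ha
  set b := |1 - a|
  set s := 2 * π * syncRadius ε with hs
  set t := 2 * π * y with ht
  have hts : t ^ 2 ≤ s ^ 2 := by
    rw [← sq_abs t, ht, hs, abs_mul, abs_of_pos two_pi_pos]
    gcongr
  have hcs : 1 - c ≤ s ^ 2 / 2 := by linarith [one_sub_sq_div_two_le_cos (x := s)]
  have hc0 : 0 ≤ c := by linarith [abs_nonneg (1 - a)]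
  have hk : |1 - a * c| ≤ b + a * (1 - c) :=
    calc |1 - a * c| = |(1 - a) + a * (1 - c)| := by ring_nf
      _ ≤ b + a * (1 - c) := by
          refine (abs_add_le _ _).trans_eq ?_
          rw [abs_of_nonneg (a := a * (1 - c)) (by nlinarith [hε.1])]
  have hk' : |a * c| ≤ a := by
    rw [abs_of_nonneg (by nlinarith [hε.1])]
    nlinarith [hε.1]
  have hrate : |1 - a * c| + |a * c| * t ^ 2 / 6 ≤ (1 + 2 * b) / 4 := by
    nlinarith [hε.1, hε.2, mul_le_mul hk' hts (sq_nonneg t) (by linarith [hε.1]),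
      mul_le_mul_of_nonneg_left hcs (by linarith [hε.1] : 0 ≤ a)]
  have hid : 2 * (y - ε * sin t * c) = (t - a * c * sin t) / π := by
    rw [ht, ha]
    field_simp
  rw [hid, abs_div, abs_of_pos pi_pos, div_le_iff₀ pi_pos]
  calc |t - a * c * sin t| ≤ (1 + 2 * b) / 4 * |t| :=
        (abs_sub_mul_sin_le _ _).trans (mul_le_mul_of_nonneg_right hrate (abs_nonneg t))
    _ = contractionRate ε * |y| * π := by
        rw [ht, abs_mul, abs_of_pos two_pi_pos, contractionRate]
        ring

theorem ae_mem_arcAroundZero_Tsc {ε : ℝ} (hε : 2 * π * ε ∈ Set.Ioo (1 / 2 : ℝ) (3 / 2))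
    {μ : Measure UnitAddCircle} [IsProbabilityMeasure μ] {Δ : ℝ} (hΔ : Δ ≤ syncRadius ε)
    (hμ : ∀ᵐ z ∂μ, z ∈ arcAroundZero Δ) :
    ∀ᵐ z ∂Tsc ε μ, z ∈ arcAroundZero (contractionRate ε * Δ) := by
  have hc : cos (2 * π * syncRadius ε) ≤ ∫ z, cosObs z ∂μ :=
    cos_le_integral_cosObs (syncRadius_le_half ε) <| hμ.mono fun _ hz => arcAroundZero_mono hΔ hz
  rw [Tsc, ae_map_iff (p := (· ∈ arcAroundZero (contractionRate ε * Δ)))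
    (continuous_fMu ε μ).aemeasurable (isClosed_arcAroundZero _).measurableSet]
  filter_upwards [hμ] with z hz
  obtain ⟨y, hy, rfl⟩ := hz
  have hy' : |y| ≤ Δ := abs_le.mpr hy
  rw [fMu_coe]
  refine ⟨_, abs_le.mp ?_, rfl⟩
  calc _ ≤ contractionRate ε * |y| :=
        abs_fMu_lift_le hε hc (integral_cosObs_le_one μ) (hy'.trans hΔ)
    _ ≤ contractionRate ε * Δ := mul_le_mul_of_nonneg_left hy' (contractionRate_nonneg ε)

theorem ae_mem_arcAroundZero_iterate_Tsc {ε : ℝ}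
    (hε : 2 * π * ε ∈ Set.Ioo (1 / 2 : ℝ) (3 / 2)) {μ : Measure UnitAddCircle}
    [IsProbabilityMeasure μ] (hμ : ∀ᵐ z ∂μ, z ∈ arcAroundZero (syncRadius ε)) (n : ℕ) :
    ∀ᵐ z ∂(fun ν => Tsc ε ν)^[n] μ,
      z ∈ arcAroundZero (contractionRate ε ^ n * syncRadius ε) := by
  induction n with
  | zero => simpa using hμ
  | succ n ih =>
    have := isProbabilityMeasure_iterate_Tsc ε μ n
    rw [iterate_succ_apply', pow_succ', mul_assoc]
    refine ae_mem_arcAroundZero_Tsc hε (mul_le_of_le_one_left (syncRadius_pos hε).le ?_) ih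
    exact pow_le_one₀ (contractionRate_nonneg ε) (contractionRate_lt_one hε).le

/-- For `ε ∈ (1/(4π), 3/(4π))`, the synchronized state `δ₀` is stable: there is `Δ₀ > 0` such
that for every probability measure `μ` supported in the projection of `[−Δ₀, Δ₀]`, the iterates
`T_ε^n μ` converge weakly to `δ₀`. -/
theorem stmt16 (ε : ℝ) (hε₁ : 1 / (4 * Real.pi) < ε) (hε₂ : ε < 3 / (4 * Real.pi)) :
    ∃ Δ₀ > (0:ℝ),
      ∀ μ : Measure UnitAddCircle, IsProbabilityMeasure μ →
        μ (((fun x : ℝ => (x : UnitAddCircle)) '' Set.Icc (-Δ₀) Δ₀)ᶜ) = 0 →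
        ∀ ψ : UnitAddCircle → ℝ, Continuous ψ →
          Filter.Tendsto (fun n : ℕ => ∫ x, ψ x ∂((fun ν => Tsc ε ν)^[n] μ))
            Filter.atTop (nhds (ψ 0)) := by
  have hε : 2 * π * ε ∈ Set.Ioo (1 / 2 : ℝ) (3 / 2) := by
    rw [div_lt_iff₀ (by positivity)] at hε₁
    rw [lt_div_iff₀ (by positivity)] at hε₂
    constructor <;> linarith
  refine ⟨syncRadius ε, syncRadius_pos hε, fun μ hμ hsupp ψ hψ => ?_⟩
  have := isProbabilityMeasure_iterate_Tsc ε μ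
  have hr : Tendsto (fun n => contractionRate ε ^ n * syncRadius ε) atTop (𝓝 0) := by
    simpa using (tendsto_pow_atTop_nhds_zero_of_lt_one (contractionRate_nonneg ε)
      (contractionRate_lt_one hε)).mul_const (syncRadius ε)
  refine tendsto_integral_of_ae_dist_le hr (fun n => ?_) hψ
  filter_upwards [ae_mem_arcAroundZero_iterate_Tsc hε (ae_iff.mpr hsupp) n] with z hz
  exact dist_zero_le_of_mem_arcAroundZero hz
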